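/- (Comparison Lemma for continued fractions) Let n ≥ 1 and let x̃ = (x_1,…,x_n) and ỹ = (y_1,…,y_n) be tuples of positive integers with x_k ≥ y_k for every k = 1,…,n. Then the Gauss measure of the corresponding cylinders satisfies μ(I(x_1,…,x_n)) ≤ μ(I(y_1,…,y_n)). -/

import Mathlib

open MeasureTheory Filter

/-- The Gauss map `T(x) = 1/x mod 1`. -/
noncomputable def gaussMap (x : ℝ) : ℝ := Int.fract (1 / x)

/-- The `n`-th partial quotient (indexed from `0`): `a_{n+1}(ω) = ⌊1 / T^n(ω)⌋`. -/
noncomputable def cfDigit (n : ℕ) (ω : ℝ) : ℕ := ⌊1 / (gaussMap^[n] ω)⌋₊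

/-- The Gauss measure on `(0,1)`, with density `1/((log 2)(1+t))` w.r.t. Lebesgue. -/
noncomputable def gaussMeasure : Measure ℝ :=
  (volume.restrict (Set.Ioo (0 : ℝ) 1)).withDensity
    (fun t => ENNReal.ofReal (1 / (Real.log 2 * (1 + t))))

/-- The cylinder `I(a_1, …, a_n)`: irrationals in `(0,1)` whose continued fraction
expansion begins with `a_1, …, a_n`. -/
def cylinder (n : ℕ) (a : Fin n → ℕ) : Set ℝ :=
  {ω | ω ∈ Set.Ioo (0 : ℝ) 1 ∧ Irrational ω ∧ ∀ i : Fin n, cfDigit i ω = a i}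

/-!
Up to countably many rationals, the cylinder `I(a₁, …, aₙ)` is the image of `(0, 1)` under
the Möbius map `t ↦ [0; a₁, …, aₙ + t]`, i.e. the open interval between `p / q` and `r / s`,
the values at `t = 0` and `t = 1`. Its Gauss measure is `|log E - log F| / log 2` with
`E = (q + p) s` and `F = q (s + r)`; the determinant identity for continuants gives
`|E - F| = 1`, so the measure is `log (1 + 1 / min E F) / log 2`. All continuants grow with the
digits, hence so does `min E F`, and the measure decreases.
-/

open Set

lemma irrational_gaussMap {ω : ℝ} (h : Irrational ω) : Irrational (gaussMap ω) := by
  rw [gaussMap, Int.fract, one_div]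
  exact h.inv.sub_intCast _

lemma gaussMap_mem_Ioo {ω : ℝ} (h : Irrational ω) : gaussMap ω ∈ Ioo 0 1 :=
  ⟨(Int.fract_nonneg _).lt_of_ne (irrational_gaussMap h).ne_zero.symm, Int.fract_lt_one _⟩

lemma cfDigit_succ (n : ℕ) (ω : ℝ) : cfDigit (n + 1) ω = cfDigit n (gaussMap ω) := by
  rw [cfDigit, Function.iterate_succ_apply, cfDigit]

lemma one_div_cfDigit_zero_add_gaussMap {ω : ℝ} (h : 0 ≤ ω) :
    1 / ((cfDigit 0 ω : ℝ) + gaussMap ω) = ω := by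
  rw [cfDigit, gaussMap, Function.iterate_zero_apply,
    natCast_floor_eq_intCast_floor (by positivity), Int.floor_add_fract, one_div_one_div]

lemma cfDigit_zero_one_div_natCast_add (a : ℕ) {t : ℝ} (ht : t ∈ Ico 0 1) :
    cfDigit 0 (1 / (a + t)) = a := by
  rw [cfDigit, Function.iterate_zero_apply, one_div_one_div, add_comm,
    Nat.floor_add_natCast ht.1, Nat.floor_eq_zero.mpr ht.2, zero_add]

lemma gaussMap_one_div_natCast_add (a : ℕ) {t : ℝ} (ht : t ∈ Ico 0 1) :
    gaussMap (1 / (a + t)) = t := by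
  rw [gaussMap, one_div_one_div, Int.fract_natCast_add, Int.fract_eq_self.mpr ht]

lemma one_div_natCast_add_mem_Ioo {a : ℕ} (ha : 0 < a) {t : ℝ} (ht : t ∈ Ioo 0 1) :
    1 / (a + t) ∈ Ioo 0 1 := by
  have ha' : (1 : ℝ) ≤ a := by exact_mod_cast ha
  have hpos : (0 : ℝ) < a + t := by linarith [ht.1]
  exact ⟨one_div_pos.mpr hpos, (div_lt_one hpos).mpr (by linarith [ht.1])⟩

lemma cylinder_succ {n : ℕ} (a : Fin (n + 1) → ℕ) (ha : 0 < a 0) :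
    cylinder (n + 1) a = (fun t => 1 / ((a 0 : ℝ) + t)) '' cylinder n (Fin.tail a) := by
  ext ω
  constructor
  · rintro ⟨hω, hirr, hdig⟩
    refine ⟨gaussMap ω, ⟨gaussMap_mem_Ioo hirr, irrational_gaussMap hirr, fun i => ?_⟩, ?_⟩
    · rw [← cfDigit_succ]
      exact hdig i.succ
    · rw [← hdig 0]
      exact one_div_cfDigit_zero_add_gaussMap hω.1.le
  · rintro ⟨t, ⟨ht, htirr, hdig⟩, rfl⟩
    have ht' : t ∈ Ico 0 1 := Ioo_subset_Ico_self ht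
    have hirr : Irrational (1 / ((a 0 : ℝ) + t)) := by
      simpa [one_div] using (htirr.natCast_add (a 0)).inv
    refine ⟨one_div_natCast_add_mem_Ioo ha ht, hirr, Fin.cases ?_ fun j => ?_⟩
    · exact cfDigit_zero_one_div_natCast_add _ ht'
    · rw [Fin.val_succ, cfDigit_succ, gaussMap_one_div_natCast_add _ ht']
      exact hdig j

/-- `cfWithTail n a t = [0; a 0, …, a (n - 1) + t]`. -/
noncomputable def cfWithTail : (n : ℕ) → (Fin n → ℕ) → ℝ → ℝ
  | 0, _, t => t
  | n + 1, a, t => 1 / (a 0 + cfWithTail n (Fin.tail a) t)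

lemma cylinder_eq_image_cfWithTail {n : ℕ} (a : Fin n → ℕ) (ha : ∀ i, 0 < a i) :
    cylinder n a = cfWithTail n a '' {t | t ∈ Ioo 0 1 ∧ Irrational t} := by
  induction n with
  | zero => simp [_root_.cylinder, cfWithTail]
  | succ n ih =>
    rw [cylinder_succ a (ha 0), ih (Fin.tail a) fun i => ha i.succ, ← image_comp]
    rfl

lemma cfWithTail_mem_Icc {n : ℕ} (a : Fin n → ℕ) (ha : ∀ i, 0 < a i) {t : ℝ}
    (ht : t ∈ Icc 0 1) : cfWithTail n a t ∈ Icc 0 1 := by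
  induction n with
  | zero => exact ht
  | succ n ih =>
    have hs := ih (Fin.tail a) fun i => ha i.succ
    have ha0 : (1 : ℝ) ≤ a 0 := by exact_mod_cast ha 0
    have hpos : (0 : ℝ) < a 0 + cfWithTail n (Fin.tail a) t := by linarith [hs.1]
    exact ⟨(one_div_pos.mpr hpos).le, (div_le_one hpos).mpr (by linarith [hs.1])⟩

lemma image_one_div_add_uIoo {c u v : ℝ} (hu : 0 < c + u) (hv : 0 < c + v) :
    (fun t => 1 / (c + t)) '' uIoo u v = uIoo (1 / (c + u)) (1 / (c + v)) := by
  wlog huv : u ≤ v generalizing u v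
  · rw [uIoo_comm, this hv hu (le_of_not_ge huv), uIoo_comm]
  have hanti : StrictAntiOn (fun t => 1 / (c + t)) (Icc u v) := fun x hx y _ hxy =>
    one_div_lt_one_div_of_lt (by linarith [hx.1]) (by linarith)
  have hcont : ContinuousOn (fun t => 1 / (c + t)) (Icc u v) :=
    continuousOn_const.div (by fun_prop) fun x hx => by linarith [hx.1]
  rw [uIoo_of_le huv, hcont.image_Ioo_of_strictAntiOn huv hanti,
    uIoo_of_ge (one_div_le_one_div_of_le hu (by linarith))]

lemma image_cfWithTail_uIoo {n : ℕ} (a : Fin n → ℕ) (ha : ∀ i, 0 < a i) {u v : ℝ}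
    (hu : u ∈ Icc 0 1) (hv : v ∈ Icc 0 1) :
    cfWithTail n a '' uIoo u v = uIoo (cfWithTail n a u) (cfWithTail n a v) := by
  induction n with
  | zero => exact image_id _
  | succ n ih =>
    have ha0 : (0 : ℝ) < a 0 := by exact_mod_cast ha 0
    have htail : ∀ i, 0 < Fin.tail a i := fun i => ha i.succ
    change (fun t => 1 / ((a 0 : ℝ) + t)) ∘ cfWithTail n (Fin.tail a) '' _ = _
    rw [image_comp, ih _ htail, image_one_div_add_uIoo]
    · rfl
    · linarith [(cfWithTail_mem_Icc _ htail hu).1]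
    · linarith [(cfWithTail_mem_Icc _ htail hv).1]

instance : NullSingletonClass gaussMeasure := by
  unfold gaussMeasure
  infer_instance

lemma measure_image_eq_of_countable_diff {α β : Type*} [MeasurableSpace β] {μ : Measure β}
    [NullSingletonClass μ] (f : α → β) {s t : Set α} (hts : t ⊆ s)
    (hc : (s \ t).Countable) : μ (f '' t) = μ (f '' s) := by
  refine le_antisymm (measure_mono (image_mono hts)) ?_
  calc μ (f '' s) = μ (f '' t ∪ f '' (s \ t)) := by rw [← image_union, union_sdiff_cancel hts]
    _ ≤ μ (f '' t) + μ (f '' (s \ t)) := measure_union_le _ _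
    _ = μ (f '' t) := by rw [(hc.image f).measure_zero μ, add_zero]

lemma gaussMeasure_cylinder_eq_uIoo {n : ℕ} (a : Fin n → ℕ) (ha : ∀ i, 0 < a i) :
    gaussMeasure (cylinder n a) = gaussMeasure (uIoo (cfWithTail n a 0) (cfWithTail n a 1)) := by
  have hrat : (Ioo (0 : ℝ) 1 \ {t | t ∈ Ioo 0 1 ∧ Irrational t}).Countable := by
    refine (countable_range ((↑) : ℚ → ℝ)).mono fun t ⟨ht, hirr⟩ => ?_
    by_contra h
    exact hirr ⟨ht, h⟩
  rw [cylinder_eq_image_cfWithTail a ha,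
    measure_image_eq_of_countable_diff _ (fun t ht => ht.1) hrat, ← uIoo_of_le zero_le_one,
    image_cfWithTail_uIoo a ha (left_mem_Icc.mpr zero_le_one) (right_mem_Icc.mpr zero_le_one)]

lemma gaussMeasure_Ioo {u v : ℝ} (hu : 0 ≤ u) (huv : u ≤ v) (hv : v ≤ 1) :
    gaussMeasure (Ioo u v) =
      ENNReal.ofReal ((Real.log (1 + v) - Real.log (1 + u)) / Real.log 2) := by
  have hpos : ∀ t ∈ Icc u v, 0 < 1 + t := fun t ht => by linarith [ht.1]
  have hderiv : ∀ t ∈ uIcc u v,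
      HasDerivAt (fun t => Real.log (1 + t) / Real.log 2) (1 / (Real.log 2 * (1 + t))) t := by
    intro t ht
    rw [uIcc_of_le huv] at ht
    exact ((((hasDerivAt_id' t).const_add 1).log (hpos t ht).ne').div_const _).congr_deriv
      (by rw [div_div, mul_comm])
  have hcont : ContinuousOn (fun t : ℝ => 1 / (Real.log 2 * (1 + t))) (Icc u v) :=
    continuousOn_const.div (by fun_prop) fun t ht =>
      mul_ne_zero (Real.log_pos one_lt_two).ne' (hpos t ht).ne'
  have hnonneg : ∀ᵐ t ∂volume.restrict (Ioo u v), 0 ≤ 1 / (Real.log 2 * (1 + t)) :=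
    ae_restrict_of_forall_mem measurableSet_Ioo fun t ht => (one_div_pos.mpr
      (mul_pos (Real.log_pos one_lt_two) (hpos t (Ioo_subset_Icc_self ht)))).le
  rw [gaussMeasure, withDensity_apply _ measurableSet_Ioo,
    Measure.restrict_restrict measurableSet_Ioo, inter_eq_left.mpr (Ioo_subset_Ioo hu hv),
    ← ofReal_integral_eq_lintegral_ofReal
      (hcont.integrableOn_Icc.mono_set Ioo_subset_Icc_self) hnonneg,
    ← integral_Ioc_eq_integral_Ioo, ← intervalIntegral.integral_of_le huv,
    intervalIntegral.integral_eq_sub_of_hasDerivAt hderiv (hcont.intervalIntegrable_of_Icc huv),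
    sub_div]

lemma gaussMeasure_uIoo {u v : ℝ} (hu : u ∈ Icc 0 1) (hv : v ∈ Icc 0 1) :
    gaussMeasure (uIoo u v) =
      ENNReal.ofReal (|Real.log (1 + u) - Real.log (1 + v)| / Real.log 2) := by
  wlog huv : u ≤ v generalizing u v
  · rw [uIoo_comm, abs_sub_comm, this hv hu (le_of_not_ge huv)]
  rw [uIoo_of_le huv, gaussMeasure_Ioo hu.1 huv hv.2, abs_sub_comm,
    abs_of_nonneg (sub_nonneg.mpr (Real.log_le_log (by linarith [hu.1]) (by linarith)))]

lemma abs_log_sub_log_of_abs_sub_eq_one {E F : ℝ} (hE : 0 < E) (hF : 0 < F) (h : |E - F| = 1) :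
    |Real.log E - Real.log F| = Real.log (1 + 1 / min E F) := by
  wlog hEF : E ≤ F generalizing E F
  · rw [abs_sub_comm, min_comm]
    exact this hF hE (by rwa [abs_sub_comm]) (le_of_not_ge hEF)
  have hF' : F = E + 1 := by
    rw [abs_sub_comm, abs_of_nonneg (by linarith)] at h
    linarith
  rw [min_eq_left hEF, abs_sub_comm, abs_of_nonneg (sub_nonneg.mpr (Real.log_le_log hE hEF)),
    ← Real.log_div hF.ne' hE.ne', hF', add_div, div_self hE.ne', add_comm]

lemma gaussMeasure_uIoo_div {p q r s : ℕ} (hq : 0 < q) (hs : 0 < s) (hpq : p ≤ q)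
    (hrs : r ≤ s) (hdet : |(p * s - q * r : ℤ)| = 1) :
    gaussMeasure (uIoo ((p : ℝ) / q) ((r : ℝ) / s)) =
      ENNReal.ofReal (Real.log (1 + 1 / (min ((q + p) * s) (q * (s + r)) : ℕ)) / Real.log 2) := by
  have hq' : (0 : ℝ) < q := by exact_mod_cast hq
  have hs' : (0 : ℝ) < s := by exact_mod_cast hs
  have hu : (p : ℝ) / q ∈ Icc 0 1 :=
    ⟨by positivity, div_le_one_of_le₀ (by exact_mod_cast hpq) hq'.le⟩
  have hv : (r : ℝ) / s ∈ Icc 0 1 :=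
    ⟨by positivity, div_le_one_of_le₀ (by exact_mod_cast hrs) hs'.le⟩
  have hlog : Real.log (1 + p / q) - Real.log (1 + r / s) =
      Real.log ((q + p) * s) - Real.log (q * (s + r)) := by
    rw [← Real.log_div (by positivity) (by positivity),
      ← Real.log_div (by positivity) (by positivity)]
    congr 1
    field_simp
  have hdiff : |((q + p) * s - q * (s + r) : ℝ)| = 1 := by
    rw [show ((q + p) * s - q * (s + r) : ℝ) = ((p * s - q * r : ℤ) : ℝ) by push_cast; ring,
      ← Int.cast_abs, hdet, Int.cast_one]
  rw [gaussMeasure_uIoo hu hv, hlog,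
    abs_log_sub_log_of_abs_sub_eq_one (by positivity) (by positivity) hdiff]
  push_cast
  rfl

/-- `continuant n a (p, q) = (p', q')` with `cfWithTail n a (p / q) = p' / q'`. -/
def continuant : (n : ℕ) → (Fin n → ℕ) → ℕ × ℕ → ℕ × ℕ
  | 0, _, x => x
  | n + 1, a, x =>
    let y := continuant n (Fin.tail a) x
    (y.2, a 0 * y.2 + y.1)

lemma continuant_snd_pos {n : ℕ} (a : Fin n → ℕ) (ha : ∀ i, 0 < a i) {x : ℕ × ℕ}
    (hx : 0 < x.2) : 0 < (continuant n a x).2 := by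
  induction n with
  | zero => exact hx
  | succ n ih => exact Nat.add_pos_left (Nat.mul_pos (ha 0) (ih _ fun i => ha i.succ)) _

lemma continuant_fst_le_snd {n : ℕ} (a : Fin n → ℕ) (ha : ∀ i, 0 < a i) {x : ℕ × ℕ}
    (hx : x.1 ≤ x.2) : (continuant n a x).1 ≤ (continuant n a x).2 := by
  cases n with
  | zero => exact hx
  | succ n => exact le_add_right (Nat.le_mul_of_pos_left _ (ha 0))

lemma cfWithTail_continuant {n : ℕ} (a : Fin n → ℕ) (ha : ∀ i, 0 < a i) {x : ℕ × ℕ}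
    (hx : 0 < x.2) :
    cfWithTail n a ((x.1 : ℝ) / x.2) = (continuant n a x).1 / (continuant n a x).2 := by
  induction n with
  | zero => rfl
  | succ n ih =>
    have hq : (0 : ℝ) < (continuant n (Fin.tail a) x).2 := by
      exact_mod_cast continuant_snd_pos _ (fun i => ha i.succ) hx
    rw [cfWithTail, ih (Fin.tail a) fun i => ha i.succ, continuant]
    push_cast
    field_simp

lemma continuant_det {n : ℕ} (a : Fin n → ℕ) (x y : ℕ × ℕ) :
    ((continuant n a x).1 * (continuant n a y).2 -
        (continuant n a x).2 * (continuant n a y).1 : ℤ) =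
      (-1) ^ n * (x.1 * y.2 - x.2 * y.1) := by
  induction n with
  | zero => simp [continuant]
  | succ n ih =>
    simp only [continuant]
    push_cast
    linear_combination -ih (Fin.tail a)

lemma continuant_mono {n : ℕ} {a b : Fin n → ℕ} (hab : ∀ i, a i ≤ b i) (x : ℕ × ℕ) :
    continuant n a x ≤ continuant n b x := by
  induction n with
  | zero => exact le_rfl
  | succ n ih =>
    obtain ⟨h1, h2⟩ := ih (a := Fin.tail a) (b := Fin.tail b) fun i => hab i.succ
    exact ⟨h2, add_le_add (Nat.mul_le_mul (hab 0) h2) h1⟩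

def cylinderDenom (n : ℕ) (a : Fin n → ℕ) : ℕ :=
  let x := continuant n a (0, 1)
  let y := continuant n a (1, 1)
  min ((x.2 + x.1) * y.2) (x.2 * (y.2 + y.1))

lemma cylinderDenom_pos {n : ℕ} (a : Fin n → ℕ) (ha : ∀ i, 0 < a i) :
    0 < cylinderDenom n a := by
  have hx := continuant_snd_pos a ha (x := (0, 1)) one_pos
  have hy := continuant_snd_pos a ha (x := (1, 1)) one_pos
  simp only [cylinderDenom]
  positivity

lemma cylinderDenom_mono {n : ℕ} {a b : Fin n → ℕ} (hab : ∀ i, a i ≤ b i) :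
    cylinderDenom n a ≤ cylinderDenom n b := by
  obtain ⟨hx1, hx2⟩ := continuant_mono hab (0, 1)
  obtain ⟨hy1, hy2⟩ := continuant_mono hab (1, 1)
  exact min_le_min (Nat.mul_le_mul (add_le_add hx2 hx1) hy2)
    (Nat.mul_le_mul hx2 (add_le_add hy2 hy1))

theorem gaussMeasure_cylinder {n : ℕ} (a : Fin n → ℕ) (ha : ∀ i, 0 < a i) :
    gaussMeasure (cylinder n a) =
      ENNReal.ofReal (Real.log (1 + 1 / cylinderDenom n a) / Real.log 2) := by
  set x := continuant n a (0, 1)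
  set y := continuant n a (1, 1)
  have h0 : cfWithTail n a 0 = x.1 / x.2 := by
    simpa using cfWithTail_continuant a ha (x := (0, 1)) one_pos
  have h1 : cfWithTail n a 1 = y.1 / y.2 := by
    simpa using cfWithTail_continuant a ha (x := (1, 1)) one_pos
  have hxq : 0 < x.2 := continuant_snd_pos a ha one_pos
  have hyq : 0 < y.2 := continuant_snd_pos a ha one_pos
  have hxp : x.1 ≤ x.2 := continuant_fst_le_snd a ha zero_le_one
  have hyp : y.1 ≤ y.2 := continuant_fst_le_snd a ha le_rfl
  have hdet : |(x.1 * y.2 - x.2 * y.1 : ℤ)| = 1 := by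
    rw [continuant_det]
    simp
  rw [gaussMeasure_cylinder_eq_uIoo a ha, h0, h1, gaussMeasure_uIoo_div hxq hyq hxp hyp hdet]
  rfl

theorem gauss_measure_comparison_lemma_general
    (n : ℕ) (x y : Fin n → ℕ)
    (hy : ∀ i, 1 ≤ y i) (hxy : ∀ i, y i ≤ x i) :
    gaussMeasure (cylinder n x) ≤ gaussMeasure (cylinder n y) := by
  have hx : ∀ i, 0 < x i := fun i => (hy i).trans (hxy i)
  have hpos := cylinderDenom_pos y hy
  have hmono := cylinderDenom_mono hxy
  rw [gaussMeasure_cylinder x hx, gaussMeasure_cylinder y hy]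
  gcongr

theorem gauss_measure_comparison_lemma
    (n : ℕ) (hn : 1 ≤ n) (x y : Fin n → ℕ)
    (hx : ∀ i, 1 ≤ x i) (hy : ∀ i, 1 ≤ y i) (hxy : ∀ i, y i ≤ x i) :
    gaussMeasure (cylinder n x) ≤ gaussMeasure (cylinder n y) :=
  gauss_measure_comparison_lemma_general n x y hy hxy
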